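/- Let G be a finite group, L a finite G-lattice with a family of nonempty sublattices L_H as in the lattice Burnside ring setting, and let (U,t),(K₁,s₁),(K₂,s₂) ∈ S(G,M_L). For i = 1,2 set Hom_i = {g_iK_i ∈ G/K_i : U ≤ {}^{g_i}K_i and t ≤ {}^{g_i}s_i}. Then the map Φ : Hom₁ × Hom₂ → ⊔_{K₁rK₂ ∈ K₁\G/K₂} {gK ∈ G/(K₁∩ʳK₂) : U ≤ ᵍ(K₁∩ʳK₂) and t ≤ ᵍ(s₁ ∧ ʳs₂)}, sending (g₁K₁, g₂K₂) to g₁r₁(K₁∩ʳK₂) in the component indexed by the double coset K₁rK₂ with g₁⁻¹g₂K₂ = r₁rK₂ and r₁ ∈ K₁, is a well-defined bijection, and it is equivariant for the action of W_G(U,t) in which the class of g ∈ N_G(U,t) sends each coset hK to g⁻¹hK. Consequently, for every (U,t) ∈ S(G,M_L), the map ω sending [(G/K)_s] to the class of the W_G(U,t)-set {gK ∈ G/K : U ≤ ᵍK and t ≤ ᵍs} extends to a ring homomorphism from Ω(G,M_L) to the Burnside ring of W_G(U,t). -/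

import Mathlib

set_option linter.unusedSectionVars false
set_option linter.unusedVariables false

open scoped Classical

namespace LB
noncomputable section

variable {G : Type*} [Group G]

/-- The conjugate subgroup `ᵍK = gKg⁻¹`. -/
def conjS (g : G) (K : Subgroup G) : Subgroup G :=
  K.map ((MulAut.conj g).toMonoidHom)

theorem mem_conjS {g x : G} {K : Subgroup G} : x ∈ conjS g K ↔ g⁻¹ * x * g ∈ K := by
  unfold conjS
  rw [Subgroup.mem_map]
  constructor
  · rintro ⟨y, hy, rfl⟩
    have h2 : g⁻¹ * ((MulAut.conj g).toMonoidHom y) * g = y := by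
      simp only [MulEquiv.coe_toMonoidHom, MulAut.conj_apply]; group
    rw [h2]; exact hy
  · intro h
    refine ⟨g⁻¹ * x * g, h, ?_⟩
    simp only [MulEquiv.coe_toMonoidHom, MulAut.conj_apply]; group

theorem conjS_mono (g : G) {K K' : Subgroup G} (h : K ≤ K') : conjS g K ≤ conjS g K' :=
  Subgroup.map_mono h

theorem conjS_one (K : Subgroup G) : conjS 1 K = K := by
  ext x; simp [mem_conjS]

theorem conjS_mul (g r : G) (K : Subgroup G) : conjS g (conjS r K) = conjS (g * r) K := by
  ext x
  rw [mem_conjS, mem_conjS, mem_conjS,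
    show r⁻¹ * (g⁻¹ * x * g) * r = (g * r)⁻¹ * x * (g * r) by group]

/-- The Möbius function of a finite partial order. -/
def mob {α : Type*} [PartialOrder α] [Finite α] (a b : α) : ℤ :=
  letI : Fintype α := Fintype.ofFinite α
  letI : @DecidableRel α α (· < ·) := Classical.decRel _
  letI : LocallyFiniteOrder α := Fintype.toLocallyFiniteOrder
  IncidenceAlgebra.mu ℤ a b

/-- A family of nonempty sublattices `L_H ⊆ L` of a finite `G`-lattice `L`
(for `H ≤ G`) satisfying the conditions of Proposition 4.2 of the paper; the binary
relation of `L` is required to be invariant under `G` (field `smul_le`).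
The data `top K` is the greatest element `sup L_K` of the sublattice `L_K`. -/
structure SubLatticeFamily (G : Type*) [Group G] (L : Type*) [Lattice L] [MulAction G L] where
  smul_le : ∀ (g : G) (x y : L), x ≤ y → g • x ≤ g • y
  S : Subgroup G → Set L
  nonempty : ∀ K, (S K).Nonempty
  inf_mem : ∀ (K : Subgroup G) {a b : L}, a ∈ S K → b ∈ S K → a ⊓ b ∈ S K
  sup_mem : ∀ (K : Subgroup G) {a b : L}, a ∈ S K → b ∈ S K → a ⊔ b ∈ S K
  top : Subgroup G → L
  top_mem : ∀ K, top K ∈ S K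
  le_top : ∀ K, ∀ a ∈ S K, a ≤ top K
  conj_eq : ∀ (g : G) (H : Subgroup G), S (conjS g H) = (g • ·) '' S H
  invariant : ∀ (H : Subgroup G), ∀ h ∈ H, ∀ s ∈ S H, h • s = s
  res_mem : ∀ {K H : Subgroup G}, K ≤ H → ∀ s ∈ S H, s ⊓ top K ∈ S K
  top_mono : ∀ {K H : Subgroup G}, K ≤ H → top K ≤ top H

variable {L : Type*} [Lattice L] [MulAction G L]

/-- The action of `G` on pairs `(K, s)`. -/
def dotL (g : G) (x : Subgroup G × L) : Subgroup G × L := (conjS g x.1, g • x.2)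

theorem dotL_one (x : Subgroup G × L) : dotL (1 : G) x = x := by
  simp [dotL, conjS_one]

theorem dotL_mul (g r : G) (x : Subgroup G × L) : dotL g (dotL r x) = dotL (g * r) x := by
  simp [dotL, conjS_mul, mul_smul]

variable (F : SubLatticeFamily G L)

/-- `(K,s) ∈ S(H, M_L)`: the pairs `(K,s)` with `K ≤ H` and `s ∈ L_K`. -/
def memS (H : Subgroup G) (x : Subgroup G × L) : Prop := x.1 ≤ H ∧ x.2 ∈ F.S x.1

/-- `N_H(K,s)`, the stabilizer in `H` of the pair `(K,s)`. -/
def NL (H : Subgroup G) (x : Subgroup G × L) : Subgroup G where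
  carrier := {g | g ∈ H ∧ dotL g x = x}
  one_mem' := ⟨H.one_mem, dotL_one x⟩
  mul_mem' := by
    rintro a b ⟨ha, da⟩ ⟨hb, db⟩
    exact ⟨H.mul_mem ha hb, by rw [← dotL_mul, db, da]⟩
  inv_mem' := by
    rintro a ⟨ha, da⟩
    refine ⟨H.inv_mem ha, ?_⟩
    conv_lhs => rw [← da]
    rw [dotL_mul, inv_mul_cancel, dotL_one]

/-- `|W_H(K,s)| = |N_H(K,s)/K|`. -/
def WCardL (H : Subgroup G) (x : Subgroup G × L) : ℕ := (x.1.subgroupOf (NL H x)).index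

/-- A complete set of representatives `R(H, M_L)` of the `H`-orbits of `S(H, M_L)`. -/
structure RepsL (F : SubLatticeFamily G L) (H : Subgroup G) where
  R : Set (Subgroup G × L)
  subset : ∀ x ∈ R, memS F H x
  complete : ∀ x, memS F H x → ∃! y, y ∈ R ∧ ∃ h ∈ H, dotL h x = y

variable {H : Subgroup G}

/-- The coordinate of a tuple indexed by a set of representatives at (the orbit of) an
arbitrary pair. -/
def coordAtL {A : Type*} [AddCommMonoid A] (ι : Set (Subgroup G × L)) (H : Subgroup G)
    (v : ↥ι → A) (y : Subgroup G × L) : A :=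
  ∑ᶠ (k : ↥ι) (_ : ∃ h ∈ H, dotL h y = ↑k), v k

/-- The class `[(H/K)_s]` expressed with respect to a family indexed by a set of
representatives: it picks out the member of the family lying in the orbit of `(K,s)`. -/
def clsSumL {A : Type*} [AddCommMonoid A] (ι : Set (Subgroup G × L)) (H : Subgroup G)
    (e : ↥ι → A) (y : Subgroup G × L) : A :=
  coordAtL ι H e y

/-- `#{hK ∈ H/K : U ≤ ʰK and t ≤ ʰs}` for `x = (K,s)`, `u = (U,t)`. -/
def invCountLe (H : Subgroup G) (x u : Subgroup G × L) : ℕ :=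
  Nat.card {q : ↥H ⧸ x.1.subgroupOf H //
    ∃ h : ↥H, QuotientGroup.mk h = q ∧ u.1 ≤ conjS (h : G) x.1 ∧ u.2 ≤ (h : G) • x.2}

/-- `#{hK ∈ H/K : U ≤ ʰK and t = res_U(ʰs) = ʰs ∧ sup L_U}` for `x = (K,s)`, `u = (U,t)`. -/
def invCountEq (F : SubLatticeFamily G L) (H : Subgroup G) (x u : Subgroup G × L) : ℕ :=
  Nat.card {q : ↥H ⧸ x.1.subgroupOf H //
    ∃ h : ↥H, QuotientGroup.mk h = q ∧ u.1 ≤ conjS (h : G) x.1 ∧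
      u.2 = ((h : G) • x.2) ⊓ F.top u.1}

/-- The mark homomorphism `φ_H` (in coordinates w.r.t. the basis `[(H/K)_s]`). -/
def phiL (R : RepsL F H) (f : ↥R.R → ℤ) : ↥R.R → ℤ :=
  fun u => ∑ᶠ k : ↥R.R, f k * (invCountEq F H k.1 u.1 : ℤ)

/-- The map `α̃_H` of Theorem 4.10 (in coordinates). -/
def alphaTL (R : RepsL F H) (f : ↥R.R → ℤ) : ↥R.R → ℤ :=
  fun u => ∑ᶠ k : ↥R.R, f k * (invCountLe H k.1 u.1 : ℤ)

/-- The subgroup `⟨r⟩U` generated by `r` and `U`. -/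
def cyc (r : G) (U : Subgroup G) : Subgroup G := Subgroup.closure {r} ⊔ U

/-- The least element of `{s ∈ L_P : s ≥ t}` (junk value if there is none). -/
def leastGE [Nonempty L] (P : Subgroup G) (t : L) : L :=
  Classical.epsilon fun s => (s ∈ F.S P ∧ t ≤ s) ∧ ∀ s', s' ∈ F.S P ∧ t ≤ s' → s ≤ s'

/-- The order of a Sylow `p`-subgroup of a group of order `n`; for `p = 0`
(representing `p = ∞`) it is `n` itself. -/
def sylCard (p n : ℕ) : ℕ := if p = 0 then n else p ^ (n.factorization p)

/-- The multiplicative set `ℤ ∖ (p)` (for `p` prime), resp. the units of `ℤ` (for `p = 0`,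
representing `p = ∞`), so that `Localization (locMon p hp)` is `ℤ_(p)`, resp. `ℤ`. -/
def locMon (p : ℕ) (hp : p = 0 ∨ p.Prime) : Submonoid ℤ where
  carrier := {k | if p = 0 then IsUnit k else ¬ (p : ℤ) ∣ k}
  one_mem' := by
    rcases hp with h | h
    · simp [h]
    · simp only [Set.mem_setOf_eq, if_neg h.ne_zero]
      intro hd
      exact h.one_lt.ne' (by exact_mod_cast Int.eq_one_of_dvd_one (by positivity) hd)
  mul_mem' := by
    intro a b ha hb
    rcases hp with h | h
    · simp only [Set.mem_setOf_eq, if_pos h] at *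
      exact ha.mul hb
    · simp only [Set.mem_setOf_eq, if_neg h.ne_zero] at *
      intro hd
      rcases ((Nat.prime_iff_prime_int.mp h).dvd_mul.mp hd) with h1 | h1
      · exact ha h1
      · exact hb h1

/-- `ℤ_(p)` (with `ℤ_(0)` interpreted as `ℤ_(∞) = ℤ`). -/
abbrev Zp (p : ℕ) (hp : p = 0 ∨ p.Prime) := Localization (locMon p hp)



/-- The map `α_H^{(p)}`. -/
def alphaL {A : Type*} [AddCommMonoid A] [Finite L] (R : RepsL F H) (x : ↥R.R → A) :
    ↥R.R → A :=
  fun u => ∑ᶠ (s : L) (_ : s ∈ F.S u.1.1 ∧ u.1.2 ≤ s), coordAtL R.R H x (u.1.1, s)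

/-- The map `β_H^{(p)}`, defined via the Möbius functions of the posets `L_U`. -/
def betaL {A : Type*} [AddCommGroup A] [Finite L] (R : RepsL F H) (x : ↥R.R → A) :
    ↥R.R → A :=
  fun u => ∑ᶠ (s : L) (hs : s ∈ F.S u.1.1 ∧ u.1.2 ≤ s),
    mob (⟨u.1.2, (R.subset u.1 u.2).2⟩ : ↥(F.S u.1.1)) ⟨s, hs.1⟩ •
      coordAtL R.R H x (u.1.1, s)

variable (p : ℕ) (hp : p = 0 ∨ p.Prime)

/-- `Obs(H, M_L)_(p)`. -/
abbrev ObsL (R : RepsL F H) :=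
  ∀ u : ↥R.R, Zp p hp ⧸ Ideal.span {(sylCard p (WCardL H u.1) : Zp p hp)}

/-- The Cauchy–Frobenius map `ψ̃_H^{(p)}`; `P u` is the choice of the subgroup of
`N_H(U,t)` containing `U` with `(P u)/U` the Sylow `p`-subgroup `W_H(U,t)_p`. -/
def psiTL (R : RepsL F H) (P : ↥R.R → Subgroup G) (x : ↥R.R → Zp p hp) : ObsL F p hp R :=
  fun u => Ideal.Quotient.mk _ (∑ᶠ q : ↥(P u) ⧸ (u.1.1.subgroupOf (P u)),
    ∑ᶠ (s : L) (_ : s ∈ F.S (cyc ((Quotient.out q : ↥(P u)) : G) u.1.1) ∧ u.1.2 ≤ s),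
      coordAtL R.R H x (cyc ((Quotient.out q : ↥(P u)) : G) u.1.1, s))

/-- The map `β̃_H^{(p)}`. -/
def betaTL [Nonempty L] (R : RepsL F H) (P : ↥R.R → Subgroup G) (x : ↥R.R → Zp p hp) :
    ObsL F p hp R :=
  fun u => Ideal.Quotient.mk _ (∑ᶠ q : ↥(P u) ⧸ (u.1.1.subgroupOf (P u)),
    coordAtL R.R H x (cyc ((Quotient.out q : ↥(P u)) : G) u.1.1,
      leastGE F (cyc ((Quotient.out q : ↥(P u)) : G) u.1.1) u.1.2))

/-- `φ_H^{(p)}` with `ℤ_(p)`-coefficients. -/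
def phiLp (R : RepsL F H) (f : ↥R.R → Zp p hp) : ↥R.R → Zp p hp :=
  fun u => ∑ᶠ k : ↥R.R, f k * (invCountEq F H k.1 u.1 : Zp p hp)

/-- The pair `(K ∩ ʰU, res(s ∧ ʰt))` appearing in the product formula. -/
def prodPairL (h : G) (x y : Subgroup G × L) : Subgroup G × L :=
  (x.1 ⊓ conjS h y.1, (x.2 ⊓ h • y.2) ⊓ F.top (x.1 ⊓ conjS h y.1))
end

universe u v

noncomputable section

variable {G : Type u} [Group G] {L : Type v} [Lattice L] [MulAction G L]
variable (F : SubLatticeFamily G L)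

theorem mem_NL {H : Subgroup G} {x : Subgroup G × L} {g : G} :
    g ∈ NL H x ↔ g ∈ H ∧ dotL g x = x := Iff.rfl

/-- `U` (viewed inside `N_G(U,t)`) is normal in `N_G(U,t)`. -/
instance normal_NL (U : Subgroup G) (t : L) :
    (U.subgroupOf (NL (⊤ : Subgroup G) (U, t))).Normal := by
  constructor
  intro a ha n
  rw [Subgroup.mem_subgroupOf] at ha ⊢
  have hmem : (n : G) ∈ (⊤ : Subgroup G) ∧ dotL (n : G) ((U, t) : Subgroup G × L)
      = (U, t) := n.2
  have hn : conjS (n : G) U = U := congrArg Prod.fst hmem.2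
  have hmem2 : ((n * a * n⁻¹ : ↥(NL (⊤ : Subgroup G) (U, t))) : G) ∈ conjS (n : G) U := by
    rw [mem_conjS]
    push_cast
    have hsimp : (n : G)⁻¹ * ((n : G) * (a : G) * (n : G)⁻¹) * (n : G) = (a : G) := by group
    rw [hsimp]
    exact ha
  rwa [hn] at hmem2

/-- The group `W_G(U,t) = N_G(U,t)/U`. -/
abbrev WQ (U : Subgroup G) (t : L) :=
  ↥(NL (⊤ : Subgroup G) (U, t)) ⧸ (U.subgroupOf (NL (⊤ : Subgroup G) (U, t)))

/-- The action map of a (term-level) `MulAction` instance. -/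
def aSmul {W X : Type*} [Monoid W] (a : MulAction W X) (w : W) (x : X) : X :=
  @SMul.smul W X a.toSMul w x

def sumFt {X Y : Type*} (fX : Fintype X) (fY : Fintype Y) : Fintype (X ⊕ Y) := by
  letI := fX; letI := fY; exact inferInstance

def prodFt {X Y : Type*} (fX : Fintype X) (fY : Fintype Y) : Fintype (X × Y) := by
  letI := fX; letI := fY; exact inferInstance

def sumAct {W X Y : Type*} [Monoid W] (aX : MulAction W X) (aY : MulAction W Y) :
    MulAction W (X ⊕ Y) := by letI := aX; letI := aY; exact inferInstance

def prodAct {W X Y : Type*} [Monoid W] (aX : MulAction W X) (aY : MulAction W Y) :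
    MulAction W (X × Y) := by letI := aX; letI := aY; exact inferInstance

def punitFt : Fintype PUnit.{u + 1} := inferInstance

def punitAct (W : Type*) [Monoid W] : MulAction W PUnit.{u + 1} := inferInstance

/-- The condition defining the hom-set `Γ((G/U, π_t), (G/K, π_s))`, viewed as a set of
cosets `gK ∈ G/K`: `U ≤ ᵍK` and `t ≤ ᵍs`. -/
def homCond (U : Subgroup G) (t : L) (K : Subgroup G) (s : L) (q : G ⧸ K) : Prop :=
  ∃ g : G, QuotientGroup.mk g = q ∧ U ≤ conjS g K ∧ t ≤ g • s

/-- The hom-set `Γ((G/U, π_t), (G/K, π_s))` as a type. -/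
abbrev HomSet (U : Subgroup G) (t : L) (K : Subgroup G) (s : L) : Type u :=
  {q : G ⧸ K // homCond U t K s q}

/-- The target of the map `Φ`: the disjoint union over the double cosets
`K₁rK₂ ∈ K₁\G/K₂` of the coset spaces `G/(K₁ ∩ ʳK₂)`. -/
abbrev TgtT (K₁ K₂ : Subgroup G) :=
  (d : DoubleCoset.Quotient (K₁ : Set G) (K₂ : Set G)) ×
    (G ⧸ (K₁ ⊓ conjS (Quotient.out d) K₂))

/-- The map `Φ` of Corollary 5.7: it sends `(g₁K₁, g₂K₂)` to the coset
`g₁r₁(K₁ ∩ ʳK₂)` in the component indexed by the double coset `K₁rK₂` of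
`g₁⁻¹g₂`, where `g₁⁻¹g₂ = r₁ r k₂` with `r₁ ∈ K₁`, `k₂ ∈ K₂`. -/
def PhiMap (K₁ K₂ : Subgroup G) (x : (G ⧸ K₁) × (G ⧸ K₂)) : TgtT K₁ K₂ :=
  let g₁ := Quotient.out x.1
  let g₂ := Quotient.out x.2
  let d : DoubleCoset.Quotient (K₁ : Set G) (K₂ : Set G) := DoubleCoset.mk K₁ K₂ (g₁⁻¹ * g₂)
  let r := Quotient.out d
  let r₁ := Classical.epsilon
    (fun r₁ : G => r₁ ∈ K₁ ∧ ∃ k₂ ∈ K₂, g₁⁻¹ * g₂ = r₁ * r * k₂)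
  ⟨d, QuotientGroup.mk (g₁ * r₁)⟩


/-!
Write `g₁⁻¹g₂ = r₁ r k₂` with `r₁ ∈ K₁`, `k₂ ∈ K₂` and `r` the chosen representative of
`K₁g₁⁻¹g₂K₂`. Then `Φ(g₁K₁, g₂K₂) = g₁r₁(K₁ ∩ ʳK₂)`, and conjugating by `g₁r₁` turns
`K₁ ∩ ʳK₂` into `ᵍ¹K₁ ∩ ᵍ²K₂` and `s₁ ∧ ʳs₂` into `ᵍ¹s₁ ∧ ᵍ²s₂`. So `Φ` is the usual
`G`-equivariant bijection `G/K₁ × G/K₂ ≅ ⊔_{K₁rK₂} G/(K₁ ∩ ʳK₂)`, and it carries the pair of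
hom-set conditions exactly onto the hom-set condition of the target.

For `ω`, extend `[(G/K)_s] ↦ [Hom]` linearly. It maps the unit `[(G/G)_{sup L_G}]` to a
one-point set. It is multiplicative on basis elements because `Φ` identifies `Hom₁ × Hom₂`,
`W_G(U,t)`-equivariantly, with the disjoint union of the hom-sets of the summands
`[(G/(K₁ ∩ ʳK₂))_{(s₁ ∧ ʳs₂) ∧ sup L_{K₁ ∩ ʳK₂}}]` of the product. Meeting with
`sup L_{K₁ ∩ ʳK₂}` does not change a hom-set, since `t ≤ sup L_U ≤ sup L_{ᵍ(K₁ ∩ ʳK₂)}`,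
and right translation identifies each hom-set with the hom-set of its orbit representative.
-/

theorem DoubleCoset.mk_mul_mul {H K : Subgroup G} {a b : G} (ha : a ∈ H) (hb : b ∈ K) (w : G) :
    DoubleCoset.mk H K (a * w * b) = DoubleCoset.mk H K w :=
  (DoubleCoset.eq H K _ _).mpr ⟨a⁻¹, H.inv_mem ha, b⁻¹, K.inv_mem hb, by group⟩

theorem DoubleCoset.exists_eq_mul_out_mul (H K : Subgroup G) (w : G) :
    ∃ a ∈ H, ∃ b ∈ K, w = a * (DoubleCoset.mk H K w).out * b := by
  obtain ⟨a, b, ha, hb, h⟩ := DoubleCoset.mk_out_eq_mul H K w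
  exact ⟨a⁻¹, H.inv_mem ha, b⁻¹, K.inv_mem hb, by rw [h]; group⟩

instance DoubleCoset.finite_quotient {G : Type*} [Group G] [Finite G] (H K : Set G) :
    Finite (DoubleCoset.Quotient H K) :=
  Quotient.finite _

def doubleCosetTopEquiv (H K : Subgroup G) :
    DoubleCoset.Quotient (H.subgroupOf ⊤ : Set ↥(⊤ : Subgroup G)) (K.subgroupOf ⊤) ≃
      DoubleCoset.Quotient (H : Set G) K :=
  Quotient.congr Subgroup.topEquiv.toEquiv fun a b => by
    rw [DoubleCoset.rel_iff, DoubleCoset.rel_iff]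
    constructor
    · rintro ⟨α, hα, β, hβ, rfl⟩
      exact ⟨α, hα, β, hβ, rfl⟩
    · rintro ⟨α, hα, β, hβ, h⟩
      exact ⟨⟨α, trivial⟩, hα, ⟨β, trivial⟩, hβ, Subtype.ext h⟩

theorem doubleCosetTopEquiv_mk (H K : Subgroup G) (w : ↥(⊤ : Subgroup G)) :
    doubleCosetTopEquiv H K (DoubleCoset.mk _ _ w) = DoubleCoset.mk H K w := rfl

def sigmaSubtypeEquiv {ι : Type*} {X : ι → Type*} (p : ∀ i, X i → Prop) :
    {z : Σ i, X i // p z.1 z.2} ≃ Σ i, {v : X i // p i v} where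
  toFun z := ⟨z.1.1, z.1.2, z.2⟩
  invFun z := ⟨⟨z.1, z.2.1⟩, z.2.2⟩
  left_inv _ := rfl
  right_inv _ := rfl

theorem LinearMap.map_mul_of_basis {R ι A B : Type*} [CommSemiring R] [Semiring A] [Algebra R A]
    [Semiring B] [Algebra R B] (b : Module.Basis ι R A) (φ : A →ₗ[R] B)
    (h : ∀ i j, φ (b i * b j) = φ (b i) * φ (b j)) (a a' : A) : φ (a * a') = φ a * φ a' :=
  LinearMap.congr_fun₂
    (b.ext fun i => b.ext fun j => h i j :
      (LinearMap.mul R A).compr₂ φ = (LinearMap.mul R B).compl₁₂ φ φ) a a'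

section ClassFunction

variable {W : Type*} [Monoid W] {B : Type*}

def IsoInvariant (cls : ∀ X : Type u, Fintype X → MulAction W X → B) : Prop :=
  ∀ (X Y : Type u) (fX : Fintype X) (fY : Fintype Y) (aX : MulAction W X) (aY : MulAction W Y),
    (∃ f : X ≃ Y, ∀ (w : W) (x : X), f (aSmul aX w x) = aSmul aY w (f x)) →
      cls X fX aX = cls Y fY aY

def SumAdditive [Add B] (cls : ∀ X : Type u, Fintype X → MulAction W X → B) : Prop :=
  ∀ (X Y : Type u) (fX : Fintype X) (fY : Fintype Y) (aX : MulAction W X) (aY : MulAction W Y),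
    cls (X ⊕ Y) (sumFt fX fY) (sumAct aX aY) = cls X fX aX + cls Y fY aY

def sigmaFt {ι : Type*} [Fintype ι] {X : ι → Type*} (f : ∀ i, Fintype (X i)) :
    Fintype (Σ i, X i) := by
  letI := f; exact inferInstance

def sigmaAct {ι : Type*} {X : ι → Type*} (a : ∀ i, MulAction W (X i)) :
    MulAction W (Σ i, X i) := by
  letI := a; exact inferInstance

def sigmaFinSuccEquiv {n : ℕ} (X : Fin (n + 1) → Type*) :
    (Σ i, X i) ≃ X 0 ⊕ Σ j : Fin n, X j.succ where
  toFun z := Fin.cases (motive := fun i => X i → X 0 ⊕ Σ j : Fin n, X j.succ)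
    Sum.inl (fun j v => Sum.inr ⟨j, v⟩) z.1 z.2
  invFun := Sum.elim (Sigma.mk 0) fun z => ⟨z.1.succ, z.2⟩
  left_inv := by
    rintro ⟨i, v⟩
    induction i using Fin.cases <;> rfl
  right_inv := by
    rintro (v | ⟨j, v⟩) <;> rfl

variable {cls : ∀ X : Type u, Fintype X → MulAction W X → B}

theorem cls_eq_one [One B] (hiso : IsoInvariant cls)
    (hone : cls PUnit punitFt (punitAct W) = 1) {X : Type u} [Subsingleton X] (x : X)
    (fX : Fintype X) (aX : MulAction W X) : cls X fX aX = 1 := by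
  rw [← hone]
  exact hiso _ _ _ _ _ _ ⟨equivOfSubsingletonOfSubsingleton (fun _ => PUnit.unit)
    (fun _ => x), fun _ _ => Subsingleton.elim _ _⟩

variable [AddCancelCommMonoid B]

theorem cls_eq_zero_of_isEmpty (hiso : IsoInvariant cls) (hadd : SumAdditive cls) {X : Type u}
    [IsEmpty X] (fX : Fintype X) (aX : MulAction W X) : cls X fX aX = 0 := by
  have h : cls (X ⊕ X) (sumFt fX fX) (sumAct aX aX) = cls X fX aX :=
    hiso _ _ _ _ _ _ ⟨Equiv.equivOfIsEmpty _ _, fun _ z => isEmptyElim z⟩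
  exact left_eq_add.mp (h.symm.trans (hadd _ _ _ _ _ _))

theorem cls_sigma_fin (hiso : IsoInvariant cls) (hadd : SumAdditive cls) (n : ℕ)
    (X : Fin n → Type u) (f : ∀ i, Fintype (X i)) (a : ∀ i, MulAction W (X i)) :
    cls (Σ i, X i) (sigmaFt f) (sigmaAct a) = ∑ i, cls (X i) (f i) (a i) := by
  induction n with
  | zero =>
    have : IsEmpty (Σ i, X i) := ⟨fun z => z.1.elim0⟩
    rw [cls_eq_zero_of_isEmpty hiso hadd, Fin.sum_univ_zero]
  | succ n ih =>
    have hsplit := hiso _ _ (sigmaFt f) (sumFt (f 0) (sigmaFt fun j : Fin n => f j.succ))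
      (sigmaAct a) (sumAct (a 0) (sigmaAct fun j : Fin n => a j.succ))
      ⟨sigmaFinSuccEquiv X, by
        rintro w ⟨i, v⟩
        induction i using Fin.cases <;> rfl⟩
    rw [hsplit, hadd, ih, Fin.sum_univ_succ]

theorem cls_sigma (hiso : IsoInvariant cls) (hadd : SumAdditive cls) {ι : Type u} [Fintype ι]
    (X : ι → Type u) (f : ∀ i, Fintype (X i)) (a : ∀ i, MulAction W (X i)) :
    cls (Σ i, X i) (sigmaFt f) (sigmaAct a) = ∑ i, cls (X i) (f i) (a i) := by
  let σ := (Fintype.equivFin ι).symm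
  have hσ := hiso _ _ (sigmaFt fun j => f (σ j)) (sigmaFt f) (sigmaAct fun j => a (σ j))
    (sigmaAct a) ⟨Equiv.sigmaCongrLeft (β := X) σ, fun _ _ => rfl⟩
  rw [← hσ, cls_sigma_fin hiso hadd, ← Equiv.sum_comp σ]

end ClassFunction

theorem conjS_inf (g : G) (A B : Subgroup G) : conjS g (A ⊓ B) = conjS g A ⊓ conjS g B := by
  ext x; simp [mem_conjS]

theorem conjS_top (g : G) : conjS g (⊤ : Subgroup G) = ⊤ := by
  ext x; simp [mem_conjS]

theorem conjS_of_mem {k : G} {K : Subgroup G} (hk : k ∈ K) : conjS k K = K := by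
  ext x
  rw [mem_conjS, K.mul_mem_cancel_right hk, K.mul_mem_cancel_left (K.inv_mem hk)]

theorem conjS_le_stabilizer_smul {X : Type*} [MulAction G X] {K : Subgroup G} {s : X}
    (hs : K ≤ MulAction.stabilizer G s) (g : G) : conjS g K ≤ MulAction.stabilizer G (g • s) := by
  rw [MulAction.stabilizer_smul_eq_stabilizer_map_conj]
  exact Subgroup.map_mono hs

namespace SubLatticeFamily

theorem smul_le_smul_iff (F : SubLatticeFamily G L) (g : G) {a b : L} :
    g • a ≤ g • b ↔ a ≤ b :=
  ⟨fun h => by simpa using F.smul_le g⁻¹ _ _ h, F.smul_le g a b⟩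

def smulOrderIso (F : SubLatticeFamily G L) (g : G) : L ≃o L where
  toEquiv := MulAction.toPerm g
  map_rel_iff' := F.smul_le_smul_iff g

theorem smul_inf (F : SubLatticeFamily G L) (g : G) (a b : L) : g • (a ⊓ b) = g • a ⊓ g • b :=
  (F.smulOrderIso g).map_inf a b

theorem inf_le_stabilizer_inf (F : SubLatticeFamily G L) {K K' : Subgroup G} {a b : L}
    (ha : K ≤ MulAction.stabilizer G a) (hb : K' ≤ MulAction.stabilizer G b) :
    K ⊓ K' ≤ MulAction.stabilizer G (a ⊓ b) := fun k hk => by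
  rw [MulAction.mem_stabilizer_iff, F.smul_inf, ha hk.1, hb hk.2]

theorem le_stabilizer {K : Subgroup G} {s : L} (hs : s ∈ F.S K) :
    K ≤ MulAction.stabilizer G s :=
  fun k hk => F.invariant K k hk s hs

theorem smul_mem_S (g : G) {K : Subgroup G} {s : L} (hs : s ∈ F.S K) :
    g • s ∈ F.S (conjS g K) := by
  rw [F.conj_eq]
  exact Set.mem_image_of_mem _ hs

theorem top_conjS (g : G) (K : Subgroup G) : F.top (conjS g K) = g • F.top K := by
  refine le_antisymm ?_ (F.le_top _ _ (F.smul_mem_S g (F.top_mem K)))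
  obtain ⟨a, ha, hga⟩ : F.top (conjS g K) ∈ (g • ·) '' F.S K := F.conj_eq g K ▸ F.top_mem _
  rw [← hga]
  exact F.smul_le g _ _ (F.le_top K a ha)

theorem dotL_top (c : G) : dotL c ((⊤ : Subgroup G), F.top ⊤) = (⊤, F.top ⊤) :=
  Prod.ext (conjS_top c) (F.invariant ⊤ c trivial _ (F.top_mem ⊤))

end SubLatticeFamily

section HomCond

variable {U K K' : Subgroup G} {t s s' : L}

theorem homCond_mk_iff (hs : K ≤ MulAction.stabilizer G s) (g : G) :
    homCond U t K s (g : G ⧸ K) ↔ U ≤ conjS g K ∧ t ≤ g • s := by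
  refine ⟨?_, fun h => ⟨g, rfl, h⟩⟩
  rintro ⟨g', hg', hU, ht⟩
  obtain ⟨k, hk, rfl⟩ : ∃ k ∈ K, g = g' * k := ⟨g'⁻¹ * g, QuotientGroup.eq.mp hg', by group⟩
  rw [← conjS_mul, conjS_of_mem hk, mul_smul, hs hk]
  exact ⟨hU, ht⟩

theorem homCond_inf_top_iff (ht : t ∈ F.S U) {q : G ⧸ K} :
    homCond U t K (s ⊓ F.top K) q ↔ homCond U t K s q := by
  refine exists_congr fun g => and_congr_right fun _ => and_congr_right fun hU => ?_
  rw [F.smul_inf, le_inf_iff, ← F.top_conjS]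
  exact and_iff_left ((F.le_top U t ht).trans (F.top_mono hU))

def rightTranslate (h : G) (hK : K' = conjS h K) : G ⧸ K ≃ G ⧸ K' where
  toFun := Quotient.map' (· * h⁻¹) fun a b hab => by
    rw [QuotientGroup.leftRel_apply, hK, mem_conjS] at *
    simpa [mul_assoc] using hab
  invFun := Quotient.map' (· * h) fun a b hab => by
    rw [QuotientGroup.leftRel_apply, hK, mem_conjS] at *
    simpa [mul_assoc] using hab
  left_inv q := Quotient.inductionOn' q fun g => by simp
  right_inv q := Quotient.inductionOn' q fun g => by simp

theorem rightTranslate_mk (h : G) (hK : K' = conjS h K) (g : G) :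
    rightTranslate h hK (g : G ⧸ K) = (g * h⁻¹ : G) := rfl

theorem rightTranslate_smul (h : G) (hK : K' = conjS h K) (n : G) (q : G ⧸ K) :
    rightTranslate h hK (n • q) = n • rightTranslate h hK q :=
  Quotient.inductionOn' q fun g => congrArg QuotientGroup.mk (mul_assoc n g h⁻¹)

theorem homCond_rightTranslate_iff (h : G) (hK : K' = conjS h K) (hs : s' = h • s)
    (q : G ⧸ K) : homCond U t K' s' (rightTranslate h hK q) ↔ homCond U t K s q := by
  constructor
  · rintro ⟨g, hg, hU, ht⟩
    refine ⟨g * h, (rightTranslate h hK).injective ?_, ?_, ?_⟩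
    · rw [rightTranslate_mk, mul_inv_cancel_right, hg]
    · rwa [← conjS_mul, ← hK]
    · rwa [mul_smul, ← hs]
  · rintro ⟨g, rfl, hU, ht⟩
    refine ⟨g * h⁻¹, rfl, ?_, ?_⟩
    · rwa [hK, conjS_mul, inv_mul_cancel_right]
    · rwa [hs, smul_smul, inv_mul_cancel_right]

end HomCond

section Phi

variable {K₁ K₂ : Subgroup G}

theorem TgtT.mk_eq_mk {d d' : DoubleCoset.Quotient (K₁ : Set G) K₂} (h : d = d') {a b : G}
    (hab : a⁻¹ * b ∈ K₁ ⊓ conjS d'.out K₂) :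
    (⟨d, (a : G ⧸ _)⟩ : TgtT K₁ K₂) = ⟨d', (b : G ⧸ _)⟩ := by
  subst h
  exact congrArg _ (QuotientGroup.eq.mpr hab)

theorem PhiMap_spec (x : (G ⧸ K₁) × (G ⧸ K₂)) :
    ∃ r₁ ∈ K₁, ∃ k₂ ∈ K₂, x.1.out⁻¹ * x.2.out =
        r₁ * (DoubleCoset.mk K₁ K₂ (x.1.out⁻¹ * x.2.out)).out * k₂ ∧
      PhiMap K₁ K₂ x = ⟨DoubleCoset.mk K₁ K₂ (x.1.out⁻¹ * x.2.out), (x.1.out * r₁ : G)⟩ := by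
  obtain ⟨hr₁, k₂, hk₂, h⟩ :=
    Classical.epsilon_spec (DoubleCoset.exists_eq_mul_out_mul K₁ K₂ (x.1.out⁻¹ * x.2.out))
  exact ⟨_, hr₁, k₂, hk₂, h, rfl⟩

theorem PhiMap_mk (d : DoubleCoset.Quotient (K₁ : Set G) K₂) {g₁ g₂ r₁ k₂ : G}
    (hr₁ : r₁ ∈ K₁) (hk₂ : k₂ ∈ K₂) (h : g₁⁻¹ * g₂ = r₁ * d.out * k₂) :
    PhiMap K₁ K₂ ((g₁ : G ⧸ K₁), (g₂ : G ⧸ K₂)) = ⟨d, (g₁ * r₁ : G)⟩ := by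
  -- `PhiMap` factors `(g₁a)⁻¹(g₂b)` instead, where `g₁a`, `g₂b` are the chosen representatives
  obtain ⟨ε, hε, k₂', hk₂', hε', hΦ⟩ := PhiMap_spec ((g₁ : G ⧸ K₁), (g₂ : G ⧸ K₂))
  obtain ⟨⟨a, ha⟩, hga⟩ := QuotientGroup.mk_out_eq_mul K₁ g₁
  obtain ⟨⟨b, hb⟩, hgb⟩ := QuotientGroup.mk_out_eq_mul K₂ g₂
  dsimp only at hε' hΦ hga hgb
  have hw : (g₁ * a)⁻¹ * (g₂ * b) = a⁻¹ * r₁ * d.out * (k₂ * b) := by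
    rw [mul_inv_rev, mul_assoc a⁻¹, ← mul_assoc g₁⁻¹, h]; group
  have hd : DoubleCoset.mk K₁ K₂ ((g₁ : G ⧸ K₁).out⁻¹ * (g₂ : G ⧸ K₂).out) = d := by
    rw [hga, hgb, hw, DoubleCoset.mk_mul_mul (K₁.mul_mem (K₁.inv_mem ha) hr₁)
      (K₂.mul_mem hk₂ hb), DoubleCoset.out_eq']
  rw [hΦ]
  rw [hd, hga, hgb, hw] at hε'
  refine TgtT.mk_eq_mk hd (Subgroup.mem_inf.mpr ⟨?_, mem_conjS.mpr ?_⟩) <;> rw [hga]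
  · simpa [mul_assoc] using K₁.mul_mem (K₁.inv_mem hε) (K₁.mul_mem (K₁.inv_mem ha) hr₁)
  · have e : a⁻¹ * r₁ * d.out = ε * d.out * k₂' * (k₂ * b)⁻¹ := by rw [← hε']; group
    have : d.out⁻¹ * ((g₁ * a * ε)⁻¹ * (g₁ * r₁)) * d.out = k₂' * (k₂ * b)⁻¹ :=
      calc _ = d.out⁻¹ * ε⁻¹ * (a⁻¹ * r₁ * d.out) := by group
        _ = k₂' * (k₂ * b)⁻¹ := by rw [e]; group
    rw [this]
    exact K₂.mul_mem hk₂' (K₂.inv_mem (K₂.mul_mem hk₂ hb))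

def phiEquiv : (G ⧸ K₁) × (G ⧸ K₂) ≃ TgtT K₁ K₂ where
  toFun := PhiMap K₁ K₂
  invFun y :=
    ((Quotient.map' id (fun a b hab => by
        rw [QuotientGroup.leftRel_apply] at hab ⊢; exact hab.1) y.2 : G ⧸ K₁),
      (Quotient.map' (· * y.1.out) (fun a b hab => by
        rw [QuotientGroup.leftRel_apply] at hab ⊢
        simpa [mul_assoc] using mem_conjS.mp hab.2) y.2 : G ⧸ K₂))
  left_inv := by
    rintro ⟨q₁, q₂⟩
    obtain ⟨g₁, rfl⟩ := QuotientGroup.mk_surjective q₁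
    obtain ⟨g₂, rfl⟩ := QuotientGroup.mk_surjective q₂
    obtain ⟨r₁, hr₁, k₂, hk₂, h⟩ := DoubleCoset.exists_eq_mul_out_mul K₁ K₂ (g₁⁻¹ * g₂)
    rw [PhiMap_mk _ hr₁ hk₂ h]
    refine Prod.ext (QuotientGroup.eq.mpr ?_) (QuotientGroup.eq.mpr ?_)
    · simpa using K₁.inv_mem hr₁
    · convert hk₂ using 1
      set r := (DoubleCoset.mk K₁ K₂ (g₁⁻¹ * g₂)).out
      calc _ = r⁻¹ * r₁⁻¹ * (g₁⁻¹ * g₂) := by group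
        _ = k₂ := by rw [h]; group
  right_inv := by
    rintro ⟨d, q⟩
    obtain ⟨g, rfl⟩ := QuotientGroup.mk_surjective q
    simpa using PhiMap_mk d K₁.one_mem K₂.one_mem (by group : g⁻¹ * (g * d.out) = 1 * d.out * 1)

theorem PhiMap_smul (g : G) (x : (G ⧸ K₁) × (G ⧸ K₂)) :
    PhiMap K₁ K₂ (g • x) = g • PhiMap K₁ K₂ x := by
  obtain ⟨q₁, q₂⟩ := x
  obtain ⟨g₁, rfl⟩ := QuotientGroup.mk_surjective q₁
  obtain ⟨g₂, rfl⟩ := QuotientGroup.mk_surjective q₂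
  obtain ⟨r₁, hr₁, k₂, hk₂, h⟩ := DoubleCoset.exists_eq_mul_out_mul K₁ K₂ (g₁⁻¹ * g₂)
  have h' : (g * g₁)⁻¹ * (g * g₂) = r₁ * (DoubleCoset.mk K₁ K₂ (g₁⁻¹ * g₂)).out * k₂ := by
    rw [← h]; group
  rw [PhiMap_mk _ hr₁ hk₂ h]
  exact (PhiMap_mk _ hr₁ hk₂ h').trans (congrArg (Sigma.mk _) (by simp [mul_assoc]))

theorem homCond_PhiMap_iff (F : SubLatticeFamily G L) {U : Subgroup G} {t s₁ s₂ : L}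
    (hs₁ : K₁ ≤ MulAction.stabilizer G s₁) (hs₂ : K₂ ≤ MulAction.stabilizer G s₂)
    (x : (G ⧸ K₁) × (G ⧸ K₂)) :
    homCond U t (K₁ ⊓ conjS (PhiMap K₁ K₂ x).1.out K₂) (s₁ ⊓ (PhiMap K₁ K₂ x).1.out • s₂)
        (PhiMap K₁ K₂ x).2 ↔ homCond U t K₁ s₁ x.1 ∧ homCond U t K₂ s₂ x.2 := by
  obtain ⟨q₁, q₂⟩ := x
  obtain ⟨g₁, rfl⟩ := QuotientGroup.mk_surjective q₁
  obtain ⟨g₂, rfl⟩ := QuotientGroup.mk_surjective q₂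
  obtain ⟨r₁, hr₁, k₂, hk₂, h⟩ := DoubleCoset.exists_eq_mul_out_mul K₁ K₂ (g₁⁻¹ * g₂)
  set r := (DoubleCoset.mk K₁ K₂ (g₁⁻¹ * g₂)).out
  have hg₂ : g₁ * r₁ * r = g₂ * k₂⁻¹ :=
    calc g₁ * r₁ * r = g₁ * (r₁ * r * k₂) * k₂⁻¹ := by group
      _ = g₂ * k₂⁻¹ := by rw [← h]; group
  rw [PhiMap_mk _ hr₁ hk₂ h]
  dsimp only
  rw [homCond_mk_iff (F.inf_le_stabilizer_inf hs₁ (conjS_le_stabilizer_smul hs₂ r)),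
    homCond_mk_iff hs₁, homCond_mk_iff hs₂, conjS_inf, conjS_mul, hg₂, ← conjS_mul g₁ r₁,
    conjS_of_mem hr₁, ← conjS_mul g₂, conjS_of_mem (K₂.inv_mem hk₂), F.smul_inf, smul_smul, hg₂,
    mul_smul g₁ r₁, hs₁ hr₁, mul_smul g₂, hs₂ (K₂.inv_mem hk₂), le_inf_iff, le_inf_iff,
    and_and_and_comm]

theorem PhiMap_bijOn (F : SubLatticeFamily G L) {U : Subgroup G} {t s₁ s₂ : L}
    (hs₁ : K₁ ≤ MulAction.stabilizer G s₁) (hs₂ : K₂ ≤ MulAction.stabilizer G s₂) :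
    Set.BijOn (PhiMap K₁ K₂)
      {x : (G ⧸ K₁) × (G ⧸ K₂) | homCond U t K₁ s₁ x.1 ∧ homCond U t K₂ s₂ x.2}
      {y : TgtT K₁ K₂ | homCond U t (K₁ ⊓ conjS y.1.out K₂) (s₁ ⊓ y.1.out • s₂) y.2} :=
  phiEquiv.bijOn (homCond_PhiMap_iff F hs₁ hs₂)

end Phi

section Decomposition

variable {U : Subgroup G} {t : L} {x y : Subgroup G × L}

theorem prodPairL_mul_mul (hx : x.1 ≤ MulAction.stabilizer G x.2)
    (hy : y.1 ≤ MulAction.stabilizer G y.2) {α β : G} (hα : α ∈ x.1) (hβ : β ∈ y.1) (r : G) :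
    prodPairL F (α * r * β) x y = dotL α (prodPairL F r x y) := by
  have hK : x.1 ⊓ conjS (α * r * β) y.1 = conjS α (x.1 ⊓ conjS r y.1) := by
    rw [conjS_inf, conjS_of_mem hα, conjS_mul, ← conjS_mul (α * r), conjS_of_mem hβ]
  refine Prod.ext hK ?_
  simp only [prodPairL, dotL]
  rw [hK, F.top_conjS, F.smul_inf, F.smul_inf, hx hα, smul_smul, mul_smul (α * r), hy hβ]

theorem prodPairL_memS (h : G) (hx : x.2 ∈ F.S x.1) (hy : y.2 ∈ F.S y.1) :
    memS F ⊤ (prodPairL F h x y) := by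
  refine ⟨le_top, ?_⟩
  have h₁ := F.res_mem (inf_le_left : x.1 ⊓ conjS h y.1 ≤ x.1) _ hx
  have h₂ := F.res_mem (inf_le_right : x.1 ⊓ conjS h y.1 ≤ conjS h y.1) _ (F.smul_mem_S h hy)
  have h₃ := F.inf_mem _ h₁ h₂
  rwa [inf_inf_inf_comm, inf_idem] at h₃

theorem exists_dotL_prodPairL_out (hx : x.1 ≤ MulAction.stabilizer G x.2)
    (hy : y.1 ≤ MulAction.stabilizer G y.2) {ι : Type*} {k : ι → Subgroup G × L}
    (e : DoubleCoset.Quotient (x.1 : Set G) y.1 ≃ ι) {o c : ι → G}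
    (ho : ∀ i, DoubleCoset.mk x.1 y.1 (o i) = e.symm i)
    (hc : ∀ i, dotL (c i) (prodPairL F (o i) x y) = k i) :
    ∃ c' : DoubleCoset.Quotient (x.1 : Set G) y.1 → G,
      ∀ d, dotL (c' d) (prodPairL F d.out x y) = k (e d) := by
  choose α hα β hβ hαβ using fun d => DoubleCoset.exists_eq_mul_out_mul x.1 y.1 (o (e d))
  refine ⟨fun d => c (e d) * α d, fun d => ?_⟩
  have hod : o (e d) = α d * d.out * β d := by
    rw [hαβ d, ho, Equiv.symm_apply_apply]
  rw [← dotL_mul, ← prodPairL_mul_mul F hx hy (hα d) (hβ d), ← hod, hc]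

variable {ι : Type*} (k : ι → Subgroup G × L) (e : DoubleCoset.Quotient (x.1 : Set G) y.1 ≃ ι)
  {c : DoubleCoset.Quotient (x.1 : Set G) y.1 → G}

def cosetProdEquiv (hc : ∀ d, dotL (c d) (prodPairL F d.out x y) = k (e d)) :
    (G ⧸ x.1) × (G ⧸ y.1) ≃ Σ i, G ⧸ (k i).1 :=
  phiEquiv.trans <| (Equiv.sigmaCongrRight fun d =>
    rightTranslate (c d) (congrArg Prod.fst (hc d)).symm).trans
      (Equiv.sigmaCongrLeft (β := fun i => G ⧸ (k i).1) e)

variable {k e} (hc : ∀ d, dotL (c d) (prodPairL F d.out x y) = k (e d))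

theorem cosetProdEquiv_apply (a : (G ⧸ x.1) × (G ⧸ y.1)) :
    cosetProdEquiv F k e hc a = ⟨e (PhiMap x.1 y.1 a).1,
      rightTranslate (c _) (congrArg Prod.fst (hc _)).symm (PhiMap x.1 y.1 a).2⟩ := rfl

theorem cosetProdEquiv_smul (g : G) (a : (G ⧸ x.1) × (G ⧸ y.1)) :
    cosetProdEquiv F k e hc (g • a) = g • cosetProdEquiv F k e hc a := by
  rw [cosetProdEquiv_apply, cosetProdEquiv_apply, PhiMap_smul]
  obtain ⟨d, v⟩ := PhiMap x.1 y.1 a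
  exact congrArg (Sigma.mk (e d)) (rightTranslate_smul _ _ _ _)

theorem homCond_cosetProdEquiv_iff (ht : t ∈ F.S U) (hx : x.1 ≤ MulAction.stabilizer G x.2)
    (hy : y.1 ≤ MulAction.stabilizer G y.2) (a : (G ⧸ x.1) × (G ⧸ y.1)) :
    homCond U t (k (cosetProdEquiv F k e hc a).1).1 (k (cosetProdEquiv F k e hc a).1).2
        (cosetProdEquiv F k e hc a).2 ↔ homCond U t x.1 x.2 a.1 ∧ homCond U t y.1 y.2 a.2 := by
  rw [← homCond_PhiMap_iff F hx hy a, cosetProdEquiv_apply]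
  exact (homCond_rightTranslate_iff _ _ (congrArg Prod.snd (hc _)).symm _).trans
    (homCond_inf_top_iff F ht)

end Decomposition

section HomSetProduct

variable {U : Subgroup G} {t : L}

def IsCosetAction {K : Subgroup G} {s : L} (a : MulAction (WQ U t) (HomSet U t K s)) : Prop :=
  ∀ (n : NL (⊤ : Subgroup G) (U, t)) (q : HomSet U t K s),
    (aSmul a (QuotientGroup.mk n) q).1 = (n : G)⁻¹ • q.1

variable {x y : Subgroup G × L} {ι : Type u} {k : ι → Subgroup G × L}
  {e : DoubleCoset.Quotient (x.1 : Set G) y.1 ≃ ι} {c : DoubleCoset.Quotient (x.1 : Set G) y.1 → G}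
  (hc : ∀ d, dotL (c d) (prodPairL F d.out x y) = k (e d)) (ht : t ∈ F.S U)
  (hx : x.1 ≤ MulAction.stabilizer G x.2) (hy : y.1 ≤ MulAction.stabilizer G y.2)

def homSetProdEquiv :
    HomSet U t x.1 x.2 × HomSet U t y.1 y.2 ≃ Σ i, HomSet U t (k i).1 (k i).2 :=
  Equiv.subtypeProdEquivProd.symm.trans <|
    ((cosetProdEquiv F k e hc).subtypeEquiv fun a =>
      (homCond_cosetProdEquiv_iff F hc ht hx hy a).symm).trans (sigmaSubtypeEquiv _)

theorem homSetProdEquiv_val (p : HomSet U t x.1 x.2 × HomSet U t y.1 y.2) :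
    Sigma.map id (fun _ => Subtype.val) (homSetProdEquiv F hc ht hx hy p) =
      cosetProdEquiv F k e hc (p.1.1, p.2.1) := rfl

theorem homSetProdEquiv_smul {ax : MulAction (WQ U t) (HomSet U t x.1 x.2)}
    {ay : MulAction (WQ U t) (HomSet U t y.1 y.2)}
    {a : ∀ i, MulAction (WQ U t) (HomSet U t (k i).1 (k i).2)} (hax : IsCosetAction ax)
    (hay : IsCosetAction ay) (ha : ∀ i, IsCosetAction (a i)) (w : WQ U t)
    (p : HomSet U t x.1 x.2 × HomSet U t y.1 y.2) :
    homSetProdEquiv F hc ht hx hy (aSmul (prodAct ax ay) w p) =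
      aSmul (sigmaAct a) w (homSetProdEquiv F hc ht hx hy p) := by
  obtain ⟨n, rfl⟩ := QuotientGroup.mk_surjective w
  apply Function.injective_id.sigma_map (β₂ := fun i => G ⧸ (k i).1)
    (f₂ := fun i (v : HomSet U t (k i).1 (k i).2) => v.1) fun _ => Subtype.val_injective
  calc Sigma.map id (fun _ => Subtype.val)
        (homSetProdEquiv F hc ht hx hy (aSmul (prodAct ax ay) (QuotientGroup.mk n) p))
      = cosetProdEquiv F k e hc ((n : G)⁻¹ • (p.1.1, p.2.1)) := by
        rw [homSetProdEquiv_val]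
        exact congrArg _ (Prod.ext (hax n p.1) (hay n p.2))
    _ = (n : G)⁻¹ • Sigma.map id (fun _ => Subtype.val) (homSetProdEquiv F hc ht hx hy p) := by
        rw [cosetProdEquiv_smul, homSetProdEquiv_val]
    _ = _ := by
        generalize homSetProdEquiv F hc ht hx hy p = z
        obtain ⟨i, v⟩ := z
        exact congrArg (Sigma.mk i) (ha i n v).symm

end HomSetProduct

section Representatives

variable {F} {H : Subgroup G} (R : RepsL F H) {z : Subgroup G × L}

theorem RepsL.exists_mem_orbit (hz : memS F H z) : ∃ k : R.R, ∃ c ∈ H, dotL c z = k :=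
  let ⟨k, ⟨hkR, hk⟩, _⟩ := R.complete z hz
  ⟨⟨k, hkR⟩, hk⟩

theorem RepsL.clsSumL_eq {A : Type*} [AddCommMonoid A] (hz : memS F H z) {k : R.R}
    (hk : ∃ c ∈ H, dotL c z = k) (v : R.R → A) : clsSumL R.R H v z = v k := by
  obtain ⟨y, -, huniq⟩ := R.complete z hz
  simp only [clsSumL, coordAtL, finsum_eq_if]
  rw [finsum_eq_single _ k fun k' hk' => if_neg fun h =>
    hk' (Subtype.ext ((huniq k' ⟨k'.2, h⟩).trans (huniq k ⟨k.2, hk⟩).symm)), if_pos hk]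

theorem RepsL.map_clsSumL {A A' Φ : Type*} [AddCommMonoid A] [AddCommMonoid A']
    [FunLike Φ A A'] [AddMonoidHomClass Φ A A'] (φ : Φ) (v : R.R → A) (hz : memS F H z) :
    φ (clsSumL R.R H v z) = clsSumL R.R H (fun k => φ (v k)) z := by
  obtain ⟨k, hk⟩ := R.exists_mem_orbit hz
  rw [R.clsSumL_eq hz hk, R.clsSumL_eq hz hk]

end Representatives

theorem cls_homSet_top_eq_one {U : Subgroup G} {t : L} (ht : t ∈ F.S U) {B : Type*} [One B]
    {cls : ∀ X : Type u, Fintype X → MulAction (WQ U t) X → B} (hiso : IsoInvariant cls)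
    (hone : cls PUnit punitFt (punitAct _) = 1) {K : Subgroup G} {s : L} (hK : K = ⊤)
    (hs : s = F.top ⊤) (f : Fintype (HomSet U t K s)) (a : MulAction (WQ U t) (HomSet U t K s)) :
    cls _ f a = 1 := by
  subst hK hs
  have : Subsingleton (G ⧸ (⊤ : Subgroup G)) := QuotientGroup.subsingleton_quotient_top
  refine cls_eq_one hiso hone ⟨(1 : G), 1, rfl, ?_, ?_⟩ f a
  · rw [conjS_one]; exact le_top
  · rw [one_smul]; exact (F.le_top U t ht).trans (F.top_mono le_top)

section Omega

variable [Finite G] (R : RepsL F ⊤) {U : Subgroup G} {t : L} {B : Type*}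
  {cls : ∀ X : Type u, Fintype X → MulAction (WQ U t) X → B}

theorem cls_prod_homSet_eq_finsum [AddCancelCommMonoid B] (ht : t ∈ F.S U) (hiso : IsoInvariant cls)
    (hadd : SumAdditive cls) {inst : ∀ k : R.R, MulAction (WQ U t) (HomSet U t k.1.1 k.1.2)}
    (hinst : ∀ k, IsCosetAction (inst k)) (x y : R.R) :
    cls _ (prodFt (Fintype.ofFinite _) (Fintype.ofFinite _)) (prodAct (inst x) (inst y)) =
      ∑ᶠ q : DoubleCoset.Quotient (x.1.1.subgroupOf ⊤ : Set ↥(⊤ : Subgroup G))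
          (y.1.1.subgroupOf ⊤),
        clsSumL R.R ⊤ (fun k => cls (HomSet U t k.1.1 k.1.2) (Fintype.ofFinite _) (inst k))
          (prodPairL F (q.out : G) x.1 y.1) := by
  have hx := (R.subset x x.2).2
  have hy := (R.subset y y.2).2
  have hmem := fun q : DoubleCoset.Quotient (x.1.1.subgroupOf ⊤ : Set ↥(⊤ : Subgroup G))
      (y.1.1.subgroupOf ⊤) => prodPairL_memS F (q.out : G) hx hy
  choose kq cq hcq hdot using fun q => R.exists_mem_orbit (hmem q)
  obtain ⟨c, hc⟩ := exists_dotL_prodPairL_out F (F.le_stabilizer hx) (F.le_stabilizer hy)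
    (doubleCosetTopEquiv x.1.1 y.1.1).symm (o := fun q => (q.out : G))
    (fun q => (doubleCosetTopEquiv_mk _ _ _).symm.trans (congrArg _ (DoubleCoset.out_eq' _ _ q)))
    hdot
  have := Fintype.ofFinite (DoubleCoset.Quotient (x.1.1.subgroupOf ⊤ : Set ↥(⊤ : Subgroup G))
    (y.1.1.subgroupOf ⊤))
  rw [finsum_congr fun q => R.clsSumL_eq (hmem q) ⟨cq q, hcq q, hdot q⟩ _,
    finsum_eq_sum_of_fintype, ← cls_sigma hiso hadd]
  exact hiso _ _ _ _ _ _ ⟨homSetProdEquiv F hc ht (F.le_stabilizer hx) (F.le_stabilizer hy),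
    homSetProdEquiv_smul F hc ht _ _ (hinst x) (hinst y) fun q => hinst _⟩

theorem clsSumL_homSet_top_eq_one [AddCommMonoid B] [One B] (ht : t ∈ F.S U)
    (hiso : IsoInvariant cls) (hone : cls PUnit punitFt (punitAct _) = 1)
    (inst : ∀ k : R.R, MulAction (WQ U t) (HomSet U t k.1.1 k.1.2)) :
    clsSumL R.R ⊤ (fun k => cls (HomSet U t k.1.1 k.1.2) (Fintype.ofFinite _) (inst k))
      ((⊤ : Subgroup G), F.top ⊤) = 1 := by
  have hz : memS F ⊤ ((⊤ : Subgroup G), F.top ⊤) := ⟨le_rfl, F.top_mem ⊤⟩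
  obtain ⟨k, c, hc, hk⟩ := R.exists_mem_orbit hz
  have hk' : k.1 = (⊤, F.top ⊤) := hk.symm.trans (F.dotL_top c)
  rw [R.clsSumL_eq hz ⟨c, hc, hk⟩]
  exact cls_homSet_top_eq_one F ht hiso hone (congrArg Prod.fst hk') (congrArg Prod.snd hk') _ _

end Omega

/-- `Ω(G, M_L)` is modelled by a ring `A` with `ℤ`-basis `e` and the double coset product
formula, the Burnside ring of `W_G(U,t)` by a ring `B` with a class map `cls` that respects
equivariant bijections, disjoint unions, products and the one-point set. -/
theorem lattice_hom_bijection_and_ring_hom [Finite G]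
    (R : RepsL F (⊤ : Subgroup G))
    (U K₁ K₂ : Subgroup G) (t s₁ s₂ : L)
    (hUt : memS F ⊤ (U, t)) (h1 : memS F ⊤ (K₁, s₁)) (h2 : memS F ⊤ (K₂, s₂))
    -- the lattice Burnside ring Ω(G, M_L)
    (A : Type*) [CommRing A] (e : ↥R.R → A)
    (hfree : LinearIndependent ℤ e)
    (hspan : Submodule.span ℤ (Set.range e) = ⊤)
    (hone : clsSumL R.R ⊤ e ((⊤ : Subgroup G), F.top ⊤) = 1)
    (hmul : ∀ x y : ↥R.R, e x * e y =
      ∑ᶠ q : DoubleCoset.Quotient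
          (↑(x.1.1.subgroupOf (⊤ : Subgroup G)) : Set ↥(⊤ : Subgroup G))
          (↑(y.1.1.subgroupOf (⊤ : Subgroup G)) : Set ↥(⊤ : Subgroup G)),
        clsSumL R.R ⊤ e
          (prodPairL F ((Quotient.out q : ↥(⊤ : Subgroup G)) : G) x.1 y.1))
    -- the Burnside ring of W_G(U,t)
    (B : Type*) [CommRing B]
    (cls : ∀ X : Type u, Fintype X → MulAction (WQ U t) X → B)
    (hcls_iso : ∀ (X Y : Type u) (fX : Fintype X) (fY : Fintype Y)
      (aX : MulAction (WQ U t) X) (aY : MulAction (WQ U t) Y),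
      (∃ f : X ≃ Y, ∀ (w : WQ U t) (x : X), f (aSmul aX w x) = aSmul aY w (f x)) →
        cls X fX aX = cls Y fY aY)
    (hcls_add : ∀ (X Y : Type u) (fX : Fintype X) (fY : Fintype Y)
      (aX : MulAction (WQ U t) X) (aY : MulAction (WQ U t) Y),
      cls (X ⊕ Y) (sumFt fX fY) (sumAct aX aY) = cls X fX aX + cls Y fY aY)
    (hcls_mul : ∀ (X Y : Type u) (fX : Fintype X) (fY : Fintype Y)
      (aX : MulAction (WQ U t) X) (aY : MulAction (WQ U t) Y),
      cls (X × Y) (prodFt fX fY) (prodAct aX aY) = cls X fX aX * cls Y fY aY)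
    (hcls_one : cls PUnit punitFt (punitAct _) = 1)
    -- the action of W_G(U,t) on the hom-sets, induced by  gU • hK = g⁻¹hK
    (inst : ∀ k : ↥R.R, MulAction (WQ U t) (HomSet U t k.1.1 k.1.2))
    (hact : ∀ (k : ↥R.R) (n : ↥(NL (⊤ : Subgroup G) (U, t)))
      (x : HomSet U t k.1.1 k.1.2),
      (aSmul (inst k) (QuotientGroup.mk n) x).1 = ((n : G))⁻¹ • x.1) :
    -- Φ is a well-defined bijection
    Set.BijOn (PhiMap K₁ K₂)
      {x : (G ⧸ K₁) × (G ⧸ K₂) | homCond U t K₁ s₁ x.1 ∧ homCond U t K₂ s₂ x.2}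
      {y : TgtT K₁ K₂ |
        homCond U t (K₁ ⊓ conjS (Quotient.out y.1) K₂)
          (s₁ ⊓ (Quotient.out y.1) • s₂) y.2} ∧
    -- Φ is equivariant for the W_G(U,t)-action  hK ↦ g⁻¹hK
    (∀ g : G, g ∈ NL (⊤ : Subgroup G) (U, t) →
      ∀ x : (G ⧸ K₁) × (G ⧸ K₂),
        (homCond U t K₁ s₁ x.1 ∧ homCond U t K₂ s₂ x.2) →
        PhiMap K₁ K₂ (g⁻¹ • x.1, g⁻¹ • x.2)
          = ⟨(PhiMap K₁ K₂ x).1, g⁻¹ • (PhiMap K₁ K₂ x).2⟩) ∧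
    -- consequently ω extends to a ring homomorphism
    (∃ f : A →+* B, ∀ k : ↥R.R,
      f (e k) = cls (HomSet U t k.1.1 k.1.2) (Fintype.ofFinite _) (inst k)) := by
  refine ⟨PhiMap_bijOn F (F.le_stabilizer h1.2) (F.le_stabilizer h2.2),
    fun g _ x _ => PhiMap_smul g⁻¹ x, ?_⟩
  let b := Module.Basis.mk hfree hspan.ge
  let φ := b.constr ℤ fun k => cls (HomSet U t k.1.1 k.1.2) (Fintype.ofFinite _) (inst k)
  have hφ : ∀ k, φ (e k) = cls (HomSet U t k.1.1 k.1.2) (Fintype.ofFinite _) (inst k) := by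
    simpa only [b, Module.Basis.coe_mk] using b.constr_basis ℤ _
  have hφcls : ∀ z, memS F ⊤ z → φ (clsSumL R.R ⊤ e z) =
      clsSumL R.R ⊤ (fun k => cls (HomSet U t k.1.1 k.1.2) (Fintype.ofFinite _) (inst k)) z :=
    fun z hz => (R.map_clsSumL φ e hz).trans (by simp only [hφ])
  have hφone : φ 1 = 1 := by
    rw [← hone, hφcls ((⊤ : Subgroup G), F.top ⊤) ⟨le_rfl, F.top_mem ⊤⟩]
    exact clsSumL_homSet_top_eq_one F R hUt.2 hcls_iso hcls_one inst
  have hφmul : ∀ x y, φ (e x * e y) = φ (e x) * φ (e y) := fun x y => by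
    rw [hmul, map_finsum φ (Set.toFinite _), hφ, hφ, ← hcls_mul,
      cls_prod_homSet_eq_finsum F R hUt.2 hcls_iso hcls_add hact x y]
    exact finsum_congr fun q => hφcls _ (prodPairL_memS F _ (R.subset x x.2).2 (R.subset y y.2).2)
  refine ⟨(AlgHom.ofLinearMap φ hφone (LinearMap.map_mul_of_basis b φ ?_)).toRingHom, hφ⟩
  simpa only [b, Module.Basis.coe_mk] using hφmul

end
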